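/- arXiv:1301.1549 — 7 statements merged into one kernel-verified Lean document; each statement's English description precedes it below -/
import Mathlib

section
/- Let k ≥ 1 be an integer, M > 0 a real number, and L[0] ≤ L[1] ≤ … ≤ L[k−1] a nondecreasing list of positive reals. Define g(i) = ∑_{j=0}^{i−1} L[j] (so g(0) = 0) and f(i) = M / (L[i]·(k−i) + g(i)) for i = 0, …, k−1. For β > 0 with β·∑_{j=0}^{k−1} L[j] ≥ M, let α*(β) be the least α ≥ 0 such that ∑_{i=0}^{k−1} min(L[i]·β, α) ≥ M. Then α*(β) = M/k whenever β ≥ f(0), and α*(β) = (M − g(i)·β)/(k−i) whenever f(i) ≤ β < f(i−1) for some i ∈ {1, …, k−1}. -/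
/-- The general threshold function for the min-cut condition
`∑_{i<k} min(L[i]·β, α) ≥ M` with nondecreasing positive income list `L`. -/
theorem stmt_0 (k : ℕ) (hk : 1 ≤ k) (M : ℝ) (hM : 0 < M)
    (L : ℕ → ℝ) (hLpos : ∀ i < k, 0 < L i)
    (hLmono : ∀ i j, i ≤ j → j < k → L i ≤ L j)
    (g f : ℕ → ℝ)
    (hg : ∀ i, g i = ∑ j ∈ Finset.range i, L j)
    (hf : ∀ i, f i = M / (L i * ((k : ℝ) - i) + g i))
    (β : ℝ) (hβ : 0 < β)
    (hfeas : M ≤ β * ∑ j ∈ Finset.range k, L j)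
    (αstar : ℝ)
    (hstar : IsLeast {α : ℝ | 0 ≤ α ∧ M ≤ ∑ i ∈ Finset.range k, min (L i * β) α} αstar) :
    (f 0 ≤ β → αstar = M / k) ∧
    (∀ i, 1 ≤ i → i < k → f i ≤ β → β < f (i - 1) →
      αstar = (M - g i * β) / ((k : ℝ) - i)) := by
  obtain ⟨⟨hα0, hαM⟩, hlb⟩ := hstar
  have hk0 : (0:ℝ) < (k:ℝ) := by exact_mod_cast hk
  constructor
  · intro hβ0
    have hL0 : 0 < L 0 := hLpos 0 hk
    have hg0 : g 0 = 0 := by simp [hg]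
    have hden : 0 < L 0 * (k:ℝ) := by positivity
    have hβ0' : M ≤ β * (L 0 * (k:ℝ)) := by
      rw [hf 0, hg0] at hβ0
      simp only [Nat.cast_zero, sub_zero, add_zero] at hβ0
      rw [div_le_iff₀ hden] at hβ0
      linarith
    have h1 : M / k ≤ L 0 * β := by
      rw [div_le_iff₀ hk0]; nlinarith
    have hmem : 0 ≤ M/(k:ℝ) ∧ M ≤ ∑ j ∈ Finset.range k, min (L j * β) (M/(k:ℝ)) := by
      constructor
      · positivity
      · have hc : ∀ j ∈ Finset.range k, min (L j * β) (M/(k:ℝ)) = M/(k:ℝ) := by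
          intro j hj
          rw [Finset.mem_range] at hj
          have h2 : L 0 * β ≤ L j * β := by
            have := hLmono 0 j (Nat.zero_le j) hj
            nlinarith
          exact min_eq_right (le_trans h1 h2)
        rw [Finset.sum_congr rfl hc, Finset.sum_const, Finset.card_range, nsmul_eq_mul,
          mul_div_cancel₀ _ (ne_of_gt hk0)]
    have hle : αstar ≤ M/(k:ℝ) := hlb hmem
    have hge : M/(k:ℝ) ≤ αstar := by
      have hsum : ∑ j ∈ Finset.range k, min (L j * β) αstar ≤ (k:ℝ) * αstar := by
        calc ∑ j ∈ Finset.range k, min (L j * β) αstar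
            ≤ ∑ _j ∈ Finset.range k, αstar :=
              Finset.sum_le_sum (fun j _ => min_le_right _ _)
          _ = (k:ℝ) * αstar := by rw [Finset.sum_const, Finset.card_range, nsmul_eq_mul]
      rw [div_le_iff₀ hk0]; nlinarith
    linarith
  · intro i hi1 hik hβi hβi1
    obtain ⟨m, rfl⟩ : ∃ m, i = m + 1 := ⟨i - 1, (Nat.succ_pred_eq_of_pos hi1).symm⟩
    simp only [Nat.add_sub_cancel] at hβi1
    have hmk : m < k := Nat.lt_of_succ_lt hik
    have hki : (0:ℝ) < (k:ℝ) - ((m:ℝ)+1) := by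
      have : ((m:ℝ)+1) < (k:ℝ) := by exact_mod_cast hik
      linarith
    have hLm : 0 < L m := hLpos m hmk
    have hLi : 0 < L (m+1) := hLpos (m+1) hik
    have hgm : 0 ≤ g m := by
      rw [hg]; apply Finset.sum_nonneg; intro j hj
      exact (hLpos j (lt_trans (Finset.mem_range.mp hj) hmk)).le
    have hgi : g (m+1) = g m + L m := by
      rw [hg, hg, Finset.sum_range_succ]
    have hkm : (0:ℝ) < (k:ℝ) - (m:ℝ) := by linarith
    -- from hβi : β * (L (m+1) * (k-(m+1)) + g (m+1)) ≥ M
    have hup : M ≤ β * (L (m+1) * ((k:ℝ) - ((m:ℝ)+1)) + g (m+1)) := by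
      rw [hf (m+1)] at hβi
      push_cast at hβi
      have hgi1 : 0 ≤ g (m+1) := by rw [hgi]; linarith
      have hd : 0 < L (m+1) * ((k:ℝ) - ((m:ℝ)+1)) + g (m+1) := by nlinarith
      rw [div_le_iff₀ hd] at hβi
      linarith
    -- from hβi1 : β * (L m * (k-m) + g m) < M
    have hlo : β * (L m * ((k:ℝ) - (m:ℝ)) + g m) < M := by
      rw [hf m] at hβi1
      have hd : 0 < L m * ((k:ℝ) - (m:ℝ)) + g m := by nlinarith
      rw [lt_div_iff₀ hd] at hβi1
      linarith
    set αi := (M - g (m+1) * β) / ((k:ℝ) - ((m:ℝ)+1)) with hαidef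
    have hαi_eq : ((k:ℝ) - ((m:ℝ)+1)) * αi = M - g (m+1) * β := by
      rw [hαidef, mul_div_cancel₀ _ (ne_of_gt hki)]
    have hαi_pos : 0 < αi := by
      apply div_pos _ hki
      rw [hgi]; nlinarith [mul_pos (mul_pos hLm hβ) hki]
    -- L m * β < αi  and  αi ≤ L (m+1) * β
    have hLmβ : L m * β < αi := by
      rw [hαidef, lt_div_iff₀ hki, hgi]; nlinarith
    have hαiLe : αi ≤ L (m+1) * β := by
      rw [hαidef, div_le_iff₀ hki]; nlinarith
    -- membership of αi
    have hsplit : ∀ α : ℝ, ∑ j ∈ Finset.range k, min (L j * β) α =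
        (∑ j ∈ Finset.range (m+1), min (L j * β) α) +
        ∑ j ∈ Finset.Ico (m+1) k, min (L j * β) α := by
      intro α
      rw [Finset.range_eq_Ico, ← Finset.sum_Ico_consecutive _ (Nat.zero_le (m+1)) hik.le,
        ← Finset.range_eq_Ico]
    have hcard : ((Finset.Ico (m+1) k).card : ℝ) = (k:ℝ) - ((m:ℝ)+1) := by
      rw [Nat.card_Ico]
      push_cast [Nat.cast_sub hik.le]
      ring
    have hmem : 0 ≤ αi ∧ M ≤ ∑ j ∈ Finset.range k, min (L j * β) αi := by
      refine ⟨hαi_pos.le, ?_⟩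
      rw [hsplit]
      have h1 : ∑ j ∈ Finset.range (m+1), min (L j * β) αi = g (m+1) * β := by
        rw [hg, Finset.sum_mul]
        apply Finset.sum_congr rfl
        intro j hj
        rw [Finset.mem_range] at hj
        have hjm : L j * β ≤ L m * β :=
          mul_le_mul_of_nonneg_right (hLmono j m (Nat.lt_succ_iff.mp hj) hmk) hβ.le
        exact min_eq_left (le_of_lt (lt_of_le_of_lt hjm hLmβ))
      have h2 : ∑ j ∈ Finset.Ico (m+1) k, min (L j * β) αi = ((k:ℝ) - ((m:ℝ)+1)) * αi := by
        rw [Finset.sum_congr rfl (fun j hj => ?_), Finset.sum_const, nsmul_eq_mul, hcard]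
        rw [Finset.mem_Ico] at hj
        exact min_eq_right (le_trans hαiLe
          (mul_le_mul_of_nonneg_right (hLmono (m+1) j hj.1 hj.2) hβ.le))
      rw [h1, h2, hαi_eq]; linarith
    have hle : αstar ≤ αi := hlb hmem
    have hge : αi ≤ αstar := by
      have hb : ∑ j ∈ Finset.range k, min (L j * β) αstar ≤
          g (m+1) * β + ((k:ℝ) - ((m:ℝ)+1)) * αstar := by
        rw [hsplit]
        refine add_le_add ?_ ?_
        · calc ∑ j ∈ Finset.range (m+1), min (L j * β) αstar
              ≤ ∑ j ∈ Finset.range (m+1), L j * β :=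
                Finset.sum_le_sum (fun j _ => min_le_left _ _)
            _ = g (m+1) * β := by rw [hg, Finset.sum_mul]
        · calc ∑ j ∈ Finset.Ico (m+1) k, min (L j * β) αstar
              ≤ ∑ _j ∈ Finset.Ico (m+1) k, αstar :=
                Finset.sum_le_sum (fun j _ => min_le_right _ _)
            _ = ((k:ℝ) - ((m:ℝ)+1)) * αstar := by
                rw [Finset.sum_const, nsmul_eq_mul, hcard]
      rw [hαidef, div_le_iff₀ hki, mul_comm]
      linarith
    have : αstar = αi := le_antisymm hle hge
    rw [this, hαidef]
    push_cast
    ring_nf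
end

section
/- Let k, d be integers with 1 ≤ k ≤ d, M > 0, and β > 0 with β·∑_{i=0}^{k−1}(d−i) ≥ M. Set γ = d·β, f_D(i) = 2Md / ((2k−i−1)·i + 2k(d−k+1)) and g_D(i) = (2d−2k+i+1)·i / (2d). Let α*(γ) be the least α ≥ 0 such that ∑_{i=0}^{k−1} min((d−i)·β, α) ≥ M. Then α*(γ) = M/k whenever γ ≥ f_D(0), and α*(γ) = (M − g_D(i)·γ)/(k−i) whenever f_D(i) ≤ γ < f_D(i−1) for some i ∈ {1, …, k−1}. -/
private lemma aux_sum_cast (n : ℕ) : ∑ j ∈ Finset.range n, (j : ℝ) = n * (n - 1) / 2 := by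
  induction n with
  | zero => simp
  | succ n ih => rw [Finset.sum_range_succ, ih]; push_cast; ring

set_option maxHeartbeats 1000000 in
/-- Threshold function of the basic regenerating-code model of Dimakis et al. -/
theorem stmt_1 (k d : ℕ) (hk : 1 ≤ k) (hkd : k ≤ d) (M : ℝ) (hM : 0 < M)
    (β : ℝ) (hβ : 0 < β)
    (hfeas : M ≤ β * ∑ i ∈ Finset.range k, ((d : ℝ) - i))
    (γ : ℝ) (hγ : γ = d * β)
    (fD gD : ℕ → ℝ)
    (hfD : ∀ i, fD i = 2 * M * d / ((2 * (k : ℝ) - i - 1) * i + 2 * k * ((d : ℝ) - k + 1)))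
    (hgD : ∀ i, gD i = (2 * (d : ℝ) - 2 * k + i + 1) * i / (2 * d))
    (αstar : ℝ)
    (hstar : IsLeast {α : ℝ | 0 ≤ α ∧
      M ≤ ∑ i ∈ Finset.range k, min (((d : ℝ) - i) * β) α} αstar) :
    (fD 0 ≤ γ → αstar = M / k) ∧
    (∀ i, 1 ≤ i → i < k → fD i ≤ γ → γ < fD (i - 1) →
      αstar = (M - gD i * γ) / ((k : ℝ) - i)) := by
  obtain ⟨⟨hα0, hαsum⟩, hlb⟩ := hstar
  have hk0 : (0:ℝ) < k := by exact_mod_cast hk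
  have hkdR : (k:ℝ) ≤ d := by exact_mod_cast hkd
  have hd0 : (0:ℝ) < d := by linarith
  constructor
  · -- case γ ≥ fD 0
    intro h0
    rw [hfD 0, hγ] at h0
    push_cast at h0
    have hden : (0:ℝ) < (2*(k:ℝ) - 0 - 1) * 0 + 2*k*((d:ℝ) - k + 1) := by nlinarith
    rw [div_le_iff₀ hden] at h0
    have hM1 : M ≤ β * k * ((d:ℝ) - k + 1) := by nlinarith
    have hmem : 0 ≤ M / k ∧
        M ≤ ∑ j ∈ Finset.range k, min (((d : ℝ) - j) * β) (M/k) := by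
      constructor
      · positivity
      · have hc : ∀ j ∈ Finset.range k, min (((d : ℝ) - j) * β) (M/k) = M/k := by
          intro j hj
          rw [Finset.mem_range] at hj
          apply min_eq_right
          rw [div_le_iff₀ hk0]
          have hjk : (j:ℝ) ≤ (k:ℝ) - 1 := by
            have : ((j:ℝ) + 1) ≤ k := by exact_mod_cast hj
            linarith
          nlinarith
        rw [Finset.sum_congr rfl hc, Finset.sum_const, Finset.card_range, nsmul_eq_mul]
        rw [mul_div_cancel₀ M (ne_of_gt hk0)]
    have hup : αstar ≤ M / k := hlb hmem
    have hdown : M / k ≤ αstar := by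
      have hb : ∑ j ∈ Finset.range k, min (((d : ℝ) - j) * β) αstar ≤ k * αstar := by
        calc ∑ j ∈ Finset.range k, min (((d : ℝ) - j) * β) αstar
            ≤ ∑ j ∈ Finset.range k, αstar :=
              Finset.sum_le_sum (fun j _ => min_le_right _ _)
          _ = k * αstar := by
              rw [Finset.sum_const, Finset.card_range, nsmul_eq_mul]
      rw [div_le_iff₀ hk0]
      nlinarith
    linarith
  · -- case fD i ≤ γ < fD (i-1)
    intro i hi1 hik hfi hfi1
    have hiR1 : (1:ℝ) ≤ (i:ℝ) := by exact_mod_cast hi1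
    have hiRk : (i:ℝ) ≤ (k:ℝ) - 1 := by
      have : ((i:ℝ) + 1) ≤ k := by exact_mod_cast hik
      linarith
    have hki : (0:ℝ) < (k:ℝ) - i := by linarith
    set m := k - i with hm
    have hkmi : k = m + i := (Nat.sub_add_cancel (le_of_lt hik)).symm
    have hmR : ((m:ℕ):ℝ) = (k:ℝ) - i := by
      rw [hm, Nat.cast_sub (le_of_lt hik)]
    -- extract the inequalities from the threshold conditions
    have hD : (0:ℝ) < (2*(k:ℝ) - i - 1) * i + 2*k*((d:ℝ) - k + 1) := by nlinarith
    rw [hfD i, hγ, div_le_iff₀ hD] at hfi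
    have hA : 2*M ≤ β * ((2*(k:ℝ) - i - 1) * i + 2*k*((d:ℝ) - k + 1)) := by nlinarith
    have hcasti : ((i - 1 : ℕ):ℝ) = (i:ℝ) - 1 := by
      rw [Nat.cast_sub hi1, Nat.cast_one]
    have hD' : (0:ℝ) < (2*(k:ℝ) - ((i:ℝ)-1) - 1) * ((i:ℝ)-1) + 2*k*((d:ℝ) - k + 1) := by
      nlinarith
    rw [hfD (i-1), hγ, hcasti, lt_div_iff₀ hD'] at hfi1
    have hB : β * ((2*(k:ℝ) - ((i:ℝ)-1) - 1) * ((i:ℝ)-1) + 2*k*((d:ℝ) - k + 1)) < 2*M := by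
      rw [← mul_lt_mul_iff_of_pos_right hd0]
      nlinarith [hfi1]
    -- abbreviations
    have hgγ : gD i * γ = (2*(d:ℝ) - 2*k + i + 1) * i * β / 2 := by
      rw [hgD i, hγ]; field_simp
    set α₀ : ℝ := (M - gD i * γ) / ((k : ℝ) - i) with hα₀
    have hα₀' : ((k:ℝ) - i) * α₀ = M - gD i * γ := by
      rw [hα₀]; field_simp
    -- key bounds on α₀
    have hlow : ((d:ℝ) - k + i) * β ≤ α₀ := by
      rw [hα₀, le_div_iff₀ hki]
      have := hgγ
      nlinarith
    have hhigh : α₀ ≤ ((d:ℝ) - k + i + 1) * β := by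
      rw [hα₀, div_le_iff₀ hki]
      nlinarith
    have h0α : 0 ≤ α₀ := by
      have : (0:ℝ) ≤ ((d:ℝ) - k + i) * β := mul_nonneg (by linarith) hβ.le
      linarith
    -- the split sum computation
    have hsplit : ∀ α : ℝ,
        ∑ j ∈ Finset.range k, (if j < m then α else ((d:ℝ) - j)*β)
          = ((k:ℝ) - i) * α + (2*(d:ℝ) - 2*k + i + 1) * i * β / 2 := by
      intro α
      rw [show (∑ j ∈ Finset.range k, (if j < m then α else ((d:ℝ) - j)*β))
            = ∑ j ∈ Finset.range (m + i), (if j < m then α else ((d:ℝ) - j)*β) by rw [← hkmi]]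
      rw [Finset.sum_range_add]
      have h1 : ∑ j ∈ Finset.range m, (if j < m then α else ((d:ℝ)-j)*β) = (m:ℝ) * α := by
        rw [Finset.sum_congr rfl (fun j hj => if_pos (Finset.mem_range.mp hj)),
          Finset.sum_const, Finset.card_range, nsmul_eq_mul]
      have h2 : ∑ j ∈ Finset.range i, (if m + j < m then α else ((d:ℝ)-(m+j:ℕ))*β)
          = ∑ j ∈ Finset.range i, (((d:ℝ)-m)*β - (j:ℝ)*β) := by
        apply Finset.sum_congr rfl
        intro j hj
        rw [if_neg (by omega)]
        push_cast
        ring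
      rw [h1, h2, Finset.sum_sub_distrib, Finset.sum_const, Finset.card_range,
        nsmul_eq_mul, ← Finset.sum_mul, aux_sum_cast, hmR]
      ring
    -- membership of α₀
    have hmem : 0 ≤ α₀ ∧ M ≤ ∑ j ∈ Finset.range k, min (((d : ℝ) - j) * β) α₀ := by
      refine ⟨h0α, ?_⟩
      have hc : ∀ j ∈ Finset.range k, min (((d : ℝ) - j) * β) α₀
          = (if j < m then α₀ else ((d:ℝ) - j)*β) := by
        intro j hj
        rw [Finset.mem_range] at hj
        by_cases hjm : j < m
        · rw [if_pos hjm]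
          apply min_eq_right
          have hjR : (j:ℝ) + 1 ≤ (m:ℝ) := by exact_mod_cast hjm
          have : ((d:ℝ) - k + i + 1) ≤ (d:ℝ) - j := by rw [hmR] at hjR; linarith
          calc α₀ ≤ ((d:ℝ) - k + i + 1) * β := hhigh
            _ ≤ ((d:ℝ) - j) * β := mul_le_mul_of_nonneg_right this hβ.le
        · rw [if_neg hjm]
          apply min_eq_left
          have hjR : (m:ℝ) ≤ (j:ℝ) := by exact_mod_cast Nat.le_of_not_lt hjm
          have : ((d:ℝ) - j) ≤ (d:ℝ) - k + i := by rw [hmR] at hjR; linarith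
          calc ((d:ℝ) - j) * β ≤ ((d:ℝ) - k + i) * β :=
                mul_le_mul_of_nonneg_right this hβ.le
            _ ≤ α₀ := hlow
      rw [Finset.sum_congr rfl hc, hsplit α₀, hα₀']
      rw [hgγ]
      linarith
    have hup : αstar ≤ α₀ := hlb hmem
    have hdown : α₀ ≤ αstar := by
      have hb : ∑ j ∈ Finset.range k, min (((d : ℝ) - j) * β) αstar
          ≤ ((k:ℝ) - i) * αstar + (2*(d:ℝ) - 2*k + i + 1) * i * β / 2 := by
        rw [← hsplit αstar]
        apply Finset.sum_le_sum
        intro j _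
        by_cases hjm : j < m
        · rw [if_pos hjm]; exact min_le_right _ _
        · rw [if_neg hjm]; exact min_le_left _ _
      rw [hα₀, div_le_iff₀ hki, hgγ]
      nlinarith
    linarith
end

section
/- Let k ≥ 2 be an integer, M > 0, and L[0] ≤ … ≤ L[k−1] a nondecreasing list of positive reals. Define g(i) = ∑_{j=0}^{i−1} L[j] and f(i) = M/(L[i]·(k−i) + g(i)). Fix i ∈ {1, …, k−1} and β with f(i) ≤ β < f(i−1), and set α = (M − g(i)·β)/(k−i). Then: (a) L[j]·β ≤ α for all j < i; (b) α ≤ L[j]·β for all j ≥ i; and (c) ∑_{j=0}^{k−1} min(L[j]·β, α) = g(i)·β + (k−i)·α = M, i.e. the mincut constraint is tight at the threshold value. -/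
/-- On the `i`-th interval `[f i, f (i-1))` of the threshold function, with
`α = (M - g i · β)/(k - i)`, exactly the `i` smallest income terms are capped
by the income and the mincut constraint is tight. -/
theorem stmt_7 (k : ℕ) (hk : 2 ≤ k) (M : ℝ) (hM : 0 < M)
    (L : ℕ → ℝ) (hLpos : ∀ i < k, 0 < L i)
    (hLmono : ∀ i j, i ≤ j → j < k → L i ≤ L j)
    (g f : ℕ → ℝ)
    (hg : ∀ i, g i = ∑ j ∈ Finset.range i, L j)
    (hf : ∀ i, f i = M / (L i * ((k : ℝ) - i) + g i))
    (i : ℕ) (hi1 : 1 ≤ i) (hik : i < k)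
    (β : ℝ) (hβ1 : f i ≤ β) (hβ2 : β < f (i - 1))
    (α : ℝ) (hα : α = (M - g i * β) / ((k : ℝ) - i)) :
    (∀ j < i, L j * β ≤ α) ∧
    (∀ j, i ≤ j → j < k → α ≤ L j * β) ∧
    (∑ j ∈ Finset.range k, min (L j * β) α = g i * β + ((k : ℝ) - i) * α ∧
      g i * β + ((k : ℝ) - i) * α = M) := by
  obtain ⟨m, rfl⟩ : ∃ m, i = m + 1 := ⟨i - 1, (Nat.succ_pred_eq_of_pos hi1).symm⟩
  have hmk : m < k := lt_trans (Nat.lt_succ_self m) hik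
  have hki : (0:ℝ) < (k:ℝ) - (m+1 : ℕ) := by
    have : ((m+1 : ℕ):ℝ) < k := by exact_mod_cast hik
    linarith
  have hgnn : ∀ n, n ≤ k → 0 ≤ g n := by
    intro n hn
    rw [hg]
    apply Finset.sum_nonneg
    intro j hj
    exact le_of_lt (hLpos j (lt_of_lt_of_le (Finset.mem_range.mp hj) hn))
  have hDi : 0 < L (m+1) * ((k:ℝ) - (m+1:ℕ)) + g (m+1) :=
    add_pos_of_pos_of_nonneg (mul_pos (hLpos _ hik) hki) (hgnn _ hik.le)
  have hβpos : 0 < β :=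
    lt_of_lt_of_le (by rw [hf]; exact div_pos hM hDi) hβ1
  -- from f i ≤ β
  have h1 : M ≤ β * (L (m+1) * ((k:ℝ) - (m+1:ℕ)) + g (m+1)) := by
    rw [hf, div_le_iff₀ hDi] at hβ1
    linarith
  -- from β < f (i-1)
  have hkm : (0:ℝ) < (k:ℝ) - m := by
    have : ((m:ℕ):ℝ) < k := by exact_mod_cast hmk
    linarith
  have hDm : 0 < L m * ((k:ℝ) - m) + g m :=
    add_pos_of_pos_of_nonneg (mul_pos (hLpos _ hmk) hkm) (hgnn _ hmk.le)
  have h2 : β * (L m * ((k:ℝ) - m) + g m) < M := by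
    have : β < f m := by simpa using hβ2
    rw [hf, lt_div_iff₀ hDm] at this
    exact this
  have hgsucc : g (m+1) = g m + L m := by
    rw [hg, hg, Finset.sum_range_succ]
  have hcast : ((m+1:ℕ):ℝ) = (m:ℝ) + 1 := by push_cast; ring
  -- key inequality: L m * β < α
  have hkey : L m * β < α := by
    rw [hα, lt_div_iff₀ hki]
    rw [hgsucc] at *
    rw [hcast] at *
    nlinarith [h2]
  -- α ≤ L (m+1) * β
  have hkey2 : α ≤ L (m+1) * β := by
    rw [hα, div_le_iff₀ hki]
    nlinarith [h1]
  have partA : ∀ j < m + 1, L j * β ≤ α := by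
    intro j hj
    have : L j ≤ L m := hLmono j m (Nat.lt_succ_iff.mp hj) hmk
    have : L j * β ≤ L m * β := mul_le_mul_of_nonneg_right this hβpos.le
    linarith
  have partB : ∀ j, m + 1 ≤ j → j < k → α ≤ L j * β := by
    intro j hj hjk
    have : L (m+1) ≤ L j := hLmono _ j hj hjk
    have : L (m+1) * β ≤ L j * β := mul_le_mul_of_nonneg_right this hβpos.le
    linarith
  refine ⟨partA, partB, ?_, ?_⟩
  · rw [← Finset.sum_range_add_sum_Ico _ hik.le]
    have e1 : ∑ j ∈ Finset.range (m+1), min (L j * β) α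
        = g (m+1) * β := by
      rw [hg, Finset.sum_mul]
      apply Finset.sum_congr rfl
      intro j hj
      exact min_eq_left (partA j (Finset.mem_range.mp hj))
    have e2 : ∑ j ∈ Finset.Ico (m+1) k, min (L j * β) α
        = ((k:ℝ) - (m+1:ℕ)) * α := by
      rw [Finset.sum_congr rfl (fun j hj => min_eq_right
        (partB j (Finset.mem_Ico.mp hj).1 (Finset.mem_Ico.mp hj).2))]
      rw [Finset.sum_const, Nat.card_Ico, nsmul_eq_mul]
      congr 1
      push_cast [Nat.cast_sub hik.le]
      ring
    rw [e1, e2]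
  · rw [hα, mul_div_cancel₀ _ (ne_of_gt hki)]
    ring
end

section
/- Let k ≥ 1 be an integer, M > 0, and L[0] ≤ … ≤ L[k−1] a nondecreasing list of positive reals. For β ≥ M/∑_{j=0}^{k−1} L[j], let α*(β) be the least α ≥ 0 such that ∑_{i=0}^{k−1} min(L[i]·β, α) ≥ M. Then α*(β) ≥ M/k for every such β, and α*(β) = M/k if and only if β ≥ M/(k·L[0]). Consequently the minimum-storage regenerating (MSR) point has storage α_MSR = M/k attained at the minimal download parameter β = f(0) = M/(L[0]·k). -/
/-- The MSR point: the threshold storage is always at least `M/k`, with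
equality exactly when `β ≥ M/(k·L 0)`, i.e. `β ≥ f 0`. -/
theorem stmt_9 (k : ℕ) (hk : 1 ≤ k) (M : ℝ) (hM : 0 < M)
    (L : ℕ → ℝ) (hLpos : ∀ i < k, 0 < L i)
    (hLmono : ∀ i j, i ≤ j → j < k → L i ≤ L j)
    (β : ℝ) (hβ : M / ∑ j ∈ Finset.range k, L j ≤ β)
    (αstar : ℝ)
    (hstar : IsLeast {α : ℝ | 0 ≤ α ∧ M ≤ ∑ i ∈ Finset.range k, min (L i * β) α} αstar) :
    M / k ≤ αstar ∧ (αstar = M / k ↔ M / (k * L 0) ≤ β) := by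
  obtain ⟨⟨hα0, hαsum⟩, hlb⟩ := hstar
  have hk0 : (0:ℝ) < k := by exact_mod_cast hk
  have hL0 : 0 < L 0 := hLpos 0 hk
  have hne : (Finset.range k).Nonempty := ⟨0, Finset.mem_range.2 hk⟩
  have hsumL : 0 < ∑ j ∈ Finset.range k, L j :=
    Finset.sum_pos (fun i hi => hLpos i (Finset.mem_range.1 hi)) hne
  have hβ0 : 0 < β := lt_of_lt_of_le (div_pos hM hsumL) hβ
  have h1 : M / k ≤ αstar := by
    have h : M ≤ ∑ _i ∈ Finset.range k, αstar :=
      le_trans hαsum (Finset.sum_le_sum fun i _ => min_le_right _ _)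
    rw [Finset.sum_const, Finset.card_range, nsmul_eq_mul] at h
    rw [div_le_iff₀ hk0]
    linarith
  refine ⟨h1, ⟨fun he => ?_, fun hb => ?_⟩⟩
  · by_contra hc
    push_neg at hc
    have hlt : L 0 * β < M / k := by
      rw [lt_div_iff₀ (by positivity : (0:ℝ) < (k:ℝ) * L 0)] at hc
      rw [lt_div_iff₀ hk0]
      nlinarith
    have : ∑ i ∈ Finset.range k, min (L i * β) (M / k)
        < ∑ _i ∈ Finset.range k, (M / k) := by
      refine Finset.sum_lt_sum (fun i _ => min_le_right _ _) ⟨0, Finset.mem_range.2 hk, ?_⟩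
      simpa [min_eq_left hlt.le] using hlt
    rw [Finset.sum_const, Finset.card_range, nsmul_eq_mul,
      mul_div_cancel₀ _ hk0.ne'] at this
    rw [he] at hαsum
    linarith
  · have hmem : 0 ≤ M / k ∧ M ≤ ∑ i ∈ Finset.range k, min (L i * β) (M / k) := by
      constructor
      · positivity
      · have heach : ∀ i ∈ Finset.range k, min (L i * β) (M / k) = M / k := by
          intro i hi
          have hik := Finset.mem_range.1 hi
          have h0i : L 0 ≤ L i := hLmono 0 i (Nat.zero_le _) hik
          have : M / k ≤ L i * β := by
            calc M / k = L 0 * (M / (k * L 0)) := by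
                  field_simp
              _ ≤ L 0 * β := by
                  exact mul_le_mul_of_nonneg_left hb hL0.le
              _ ≤ L i * β := mul_le_mul_of_nonneg_right h0i hβ0.le
          exact min_eq_right this
        rw [Finset.sum_congr rfl heach, Finset.sum_const, Finset.card_range,
          nsmul_eq_mul, mul_div_cancel₀ _ hk0.ne']
    have := hlb hmem
    linarith
end

section
/- Let k ≥ 1 be an integer, M > 0, and L[0] ≤ … ≤ L[k−1] a nondecreasing list of positive reals. Let f(k−1) = M/∑_{j=0}^{k−1} L[j] be the minimal feasible download parameter, and let α*(β) be the least α ≥ 0 such that ∑_{i=0}^{k−1} min(L[i]·β, α) ≥ M. Then at the minimum-bandwidth regenerating (MBR) point β = f(k−1), the minimal storage is α*(f(k−1)) = M·L[k−1] / ∑_{j=0}^{k−1} L[j]. -/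
/-- The MBR point: at the minimal feasible download parameter
`β = f (k-1) = M / ∑ L`, the threshold storage equals `M · L (k-1) / ∑ L`. -/
theorem stmt_10 (k : ℕ) (hk : 1 ≤ k) (M : ℝ) (hM : 0 < M)
    (L : ℕ → ℝ) (hLpos : ∀ i < k, 0 < L i)
    (hLmono : ∀ i j, i ≤ j → j < k → L i ≤ L j)
    (β : ℝ) (hβ : β = M / ∑ j ∈ Finset.range k, L j)
    (αstar : ℝ)
    (hstar : IsLeast {α : ℝ | 0 ≤ α ∧ M ≤ ∑ i ∈ Finset.range k, min (L i * β) α} αstar) :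
    αstar = M * L (k - 1) / ∑ j ∈ Finset.range k, L j := by
  have hS : 0 < ∑ j ∈ Finset.range k, L j :=
    Finset.sum_pos (fun i hi => hLpos i (Finset.mem_range.mp hi))
      ⟨0, Finset.mem_range.mpr hk⟩
  have hβpos : 0 < β := by rw [hβ]; positivity
  have hβS : (∑ j ∈ Finset.range k, L j) * β = M := by
    rw [hβ]; field_simp
  have hk1 : k - 1 < k := Nat.sub_lt hk one_pos
  have hLk : 0 < L (k - 1) := hLpos _ hk1
  have hsum : ∑ i ∈ Finset.range k, L i * β = M := by
    rw [← Finset.sum_mul, hβS]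
  have hmem : L (k - 1) * β ∈
      {α : ℝ | 0 ≤ α ∧ M ≤ ∑ i ∈ Finset.range k, min (L i * β) α} := by
    refine ⟨by positivity, ?_⟩
    have h : ∀ i ∈ Finset.range k, min (L i * β) (L (k - 1) * β) = L i * β := by
      intro i hi
      exact min_eq_left (mul_le_mul_of_nonneg_right
        (hLmono i (k - 1) (Nat.le_sub_one_of_lt (Finset.mem_range.mp hi)) hk1) hβpos.le)
    rw [Finset.sum_congr rfl h, hsum]
  have hlb : ∀ α ∈ {α : ℝ | 0 ≤ α ∧ M ≤ ∑ i ∈ Finset.range k, min (L i * β) α},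
      L (k - 1) * β ≤ α := by
    intro α hα
    by_contra hlt
    push_neg at hlt
    have hstrict : ∑ i ∈ Finset.range k, min (L i * β) α <
        ∑ i ∈ Finset.range k, L i * β := by
      refine Finset.sum_lt_sum (fun i _ => min_le_left _ _)
        ⟨k - 1, Finset.mem_range.mpr hk1, ?_⟩
      calc min (L (k - 1) * β) α ≤ α := min_le_right _ _
        _ < L (k - 1) * β := hlt
    rw [hsum] at hstrict
    linarith [hα.2]
  have := hstar.unique ⟨hmem, hlb⟩
  rw [this, hβ]; ring
end

section
/- Let k, d₁, d₂ be integers with 1 ≤ k ≤ d₁ ≤ d₂ and set d = d₁ + d₂. For a real parameter τ ≥ 1 define L_τ[j] = (d₁−k+1+j)·τ + d₂ for j = 0, …, k−1, g_τ(i) = ∑_{j=0}^{i−1} L_τ[j], and D_τ(i) = L_τ[i]·(k−i) + g_τ(i). Fix i ∈ {0, …, k−1}. Then: (a) τ ↦ D_τ(i) is strictly increasing on [1, ∞); (b) consequently the cost ratio η(τ) = ((2k−i−1)·i + 2k(d−k+1)) / (2·D_τ(i)) is strictly decreasing on [1, ∞) with η(1) = 1. Hence, for any fixed per-unit costs C_c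 < C_e, both repair costs C_T¹ = f_τ(i)·(C_c d₁ τ + C_e d₂) relative to their τ = 1 value, and C_T² = f_τ(i)·(C_c d₂ τ + C_e d₁) relative to their τ = 1 value, strictly decrease as τ increases, where f_τ(i) = M/D_τ(i) for M > 0. -/
private lemma stmt_12_aux (M x y c : ℝ) (hM : M ≠ 0) (hx : x ≠ 0) (_hy : y ≠ 0)
    (hc : c ≠ 0) : (M / x * c) / (M / y * c) = y / x := by
  field_simp

/-- In the two-rack model with `k ≤ d₁ ≤ d₂`: the denominator `D τ i` of the
breakpoint `f_τ(i) = M / D τ i` is strictly increasing in `τ`, the cost ratio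
`η` is strictly decreasing with `η 1 = 1`, and hence both repair costs,
relative to their `τ = 1` values, strictly decrease as `τ` increases. -/
theorem stmt_12 (k d1 d2 d : ℕ) (hk : 1 ≤ k) (hkd1 : k ≤ d1) (hd12 : d1 ≤ d2)
    (hd : d = d1 + d2) (M : ℝ) (hM : 0 < M)
    (L : ℝ → ℕ → ℝ) (hL : ∀ τ j, L τ j = ((d1 : ℝ) - k + 1 + j) * τ + d2)
    (D : ℝ → ℕ → ℝ)
    (hD : ∀ τ i, D τ i = L τ i * ((k : ℝ) - i) + ∑ j ∈ Finset.range i, L τ j)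
    (i : ℕ) (hik : i < k)
    (η : ℝ → ℝ)
    (hη : ∀ τ, η τ = ((2 * (k : ℝ) - i - 1) * i + 2 * k * ((d : ℝ) - k + 1)) / (2 * D τ i))
    (Cc Ce : ℝ) (hCc : 0 < Cc) (hCce : Cc < Ce) :
    StrictMonoOn (fun τ => D τ i) (Set.Ici (1 : ℝ)) ∧
    (StrictAntiOn η (Set.Ici (1 : ℝ)) ∧ η 1 = 1) ∧
    (∀ τ1 ∈ Set.Ici (1 : ℝ), ∀ τ2 ∈ Set.Ici (1 : ℝ), τ1 < τ2 →
      (M / D τ2 i * (Cc * d1 * τ2 + Ce * d2)) / (M / D 1 i * (Cc * d1 * τ2 + Ce * d2)) <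
        (M / D τ1 i * (Cc * d1 * τ1 + Ce * d2)) / (M / D 1 i * (Cc * d1 * τ1 + Ce * d2)) ∧
      (M / D τ2 i * (Cc * d2 * τ2 + Ce * d1)) / (M / D 1 i * (Cc * d2 * τ2 + Ce * d1)) <
        (M / D τ1 i * (Cc * d2 * τ1 + Ce * d1)) / (M / D 1 i * (Cc * d2 * τ1 + Ce * d1))) := by
  have hk1 : (1 : ℝ) ≤ (k : ℝ) := by exact_mod_cast hk
  have hkd1' : (k : ℝ) ≤ (d1 : ℝ) := by exact_mod_cast hkd1
  have hd12' : (d1 : ℝ) ≤ (d2 : ℝ) := by exact_mod_cast hd12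
  have hikR : (i : ℝ) < (k : ℝ) := by exact_mod_cast hik
  have hiN : (0 : ℝ) ≤ (i : ℝ) := by positivity
  set S : ℝ := ∑ j ∈ Finset.range i, ((d1 : ℝ) - k + 1 + j) with hS
  set A : ℝ := ((d1 : ℝ) - k + 1 + i) * ((k : ℝ) - i) + S with hA
  -- linear form of D
  have hDlin : ∀ τ : ℝ, D τ i = A * τ + (d2 : ℝ) * k := by
    intro τ
    rw [hD, hL]
    have hsum : ∑ j ∈ Finset.range i, L τ j = S * τ + (i : ℝ) * d2 := by
      rw [hS, Finset.sum_mul]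
      simp only [hL]
      rw [Finset.sum_add_distrib, Finset.sum_const, Finset.card_range,
        nsmul_eq_mul]
    rw [hsum, hA]
    ring
  have hSnn : 0 ≤ S := by
    apply Finset.sum_nonneg
    intro j hj
    have : (0 : ℝ) ≤ (j : ℝ) := by positivity
    linarith
  have hApos : 0 < A := by
    have h1 : (1 : ℝ) ≤ (d1 : ℝ) - k + 1 + i := by linarith
    have h2 : (1 : ℝ) ≤ (k : ℝ) - i := by
      have : (i : ℝ) + 1 ≤ (k : ℝ) := by exact_mod_cast hik
      linarith
    nlinarith
  have hDpos : ∀ τ : ℝ, 1 ≤ τ → 0 < D τ i := by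
    intro τ hτ
    rw [hDlin]
    have : (0 : ℝ) ≤ (d2 : ℝ) * k := by positivity
    nlinarith
  have hmono : StrictMonoOn (fun τ => D τ i) (Set.Ici (1 : ℝ)) := by
    intro a _ b _ hab
    simp only [hDlin]
    nlinarith
  have hSval : S = (i : ℝ) * ((d1 : ℝ) - k + 1) + (i : ℝ) * ((i : ℝ) - 1) / 2 := by
    rw [hS, Finset.sum_add_distrib, Finset.sum_const, Finset.card_range]
    have hg : (∑ j ∈ Finset.range i, (j : ℝ)) = (i : ℝ) * ((i : ℝ) - 1) / 2 := by
      have h0 := Finset.sum_range_id_mul_two i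
      have h2 : ((∑ j ∈ Finset.range i, (j : ℕ)) : ℝ) * 2 = (i : ℝ) * ((i : ℝ) - 1) := by
        have := congrArg (fun n : ℕ => (n : ℝ)) h0
        push_cast at this
        cases Nat.eq_zero_or_pos i with
        | inl h => subst h; simp
        | inr h =>
          rw [Nat.cast_sub h] at this
          push_cast at this
          linarith
      push_cast at h2 ⊢
      linarith
    rw [hg]; ring
  have hNum : (2 * (k : ℝ) - i - 1) * i + 2 * k * ((d : ℝ) - k + 1) = 2 * D 1 i := by
    rw [hDlin, hA, hSval, hd]
    push_cast
    ring
  have hD1 : 0 < D 1 i := hDpos 1 le_rfl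
  refine ⟨hmono, ⟨?_, ?_⟩, ?_⟩
  · intro a ha b hb hab
    rw [hη, hη, hNum]
    have hDa := hDpos a ha
    have hDb := hDpos b hb
    have hDab : D a i < D b i := hmono ha hb hab
    exact div_lt_div_of_pos_left (by linarith) (by linarith) (by linarith)
  · rw [hη, hNum]
    exact div_self (by positivity)
  · intro τ1 hτ1 τ2 hτ2 h12
    have hD1' := hDpos τ1 hτ1
    have hD2' := hDpos τ2 hτ2
    have hDab : D τ1 i < D τ2 i := hmono hτ1 hτ2 h12
    have key : ∀ (x c : ℝ), 0 < x → 0 < c →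
        (M / x * c) / (M / D 1 i * c) = D 1 i / x :=
      fun x c hx hc => stmt_12_aux M x (D 1 i) c hM.ne' hx.ne' hD1.ne' hc.ne'
    have hd1R : (1 : ℝ) ≤ (d1 : ℝ) := le_trans hk1 hkd1'
    have hd2R : (1 : ℝ) ≤ (d2 : ℝ) := le_trans hd1R hd12'
    have hCe : (0 : ℝ) < Ce := lt_trans hCc hCce
    have hτ1' : (0 : ℝ) < τ1 := lt_of_lt_of_le one_pos hτ1
    have hτ2' : (0 : ℝ) < τ2 := lt_of_lt_of_le one_pos hτ2
    have p1 : 0 < Cc * d1 * τ1 := by positivity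
    have p2 : 0 < Cc * d1 * τ2 := by positivity
    have p3 : 0 < Cc * d2 * τ1 := by positivity
    have p4 : 0 < Cc * d2 * τ2 := by positivity
    have p5 : 0 < Ce * d2 := by positivity
    have p6 : 0 < Ce * d1 := by positivity
    have hc1 : 0 < Cc * d1 * τ1 + Ce * d2 := by linarith
    have hc2 : 0 < Cc * d1 * τ2 + Ce * d2 := by linarith
    have hc3 : 0 < Cc * d2 * τ1 + Ce * d1 := by linarith
    have hc4 : 0 < Cc * d2 * τ2 + Ce * d1 := by linarith
    constructor
    · rw [key _ _ hD2' hc2, key _ _ hD1' hc1]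
      exact div_lt_div_of_pos_left hD1 hD1' hDab
    · rw [key _ _ hD2' hc4, key _ _ hD1' hc3]
      exact div_lt_div_of_pos_left hD1 hD1' hDab
end

section
/- Let k, d₁, d₂ be integers with 0 ≤ d₁ < k and k − d₁ − 1 ≤ d₂, let τ ≥ 1 and β > 0 be reals, and let M > 0. Consider the static-cost income multiset S consisting of ((d₁−i)τ + d₂)·β for i = 0, …, d₁ together with (d₂−i)·β for i = 1, …, k−d₁−1, and the rack-model income multiset R consisting of ((d₁−i)τ + d₂)·β for i = 0, …, d₁ together with (d₂−i)·τ·β for i = 1, …, k−d₁−1 (both multisets have k elements). Then for every α ≥ 0, ∑_{x∈S} min(x, α) ≤ ∑_{x∈R} min(x, α); consequently, whenever the static model is feasible (∑_{x∈S} x ≥ M), the least α with ∑_{x∈R} min(x, α) ≥ M is at most the least α with ∑_{x∈S} min(x, α) ≥ M. -/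
/-- For `k > d₁`, the rack-model income multiset pointwise dominates the
static-cost-model one in the mincut sums, so the rack model needs at most as
much storage per node for the same `β`. -/
theorem stmt_15 (k d1 d2 : ℕ) (hd1k : d1 < k) (hkd2 : k - d1 - 1 ≤ d2)
    (τ : ℝ) (hτ : 1 ≤ τ) (β : ℝ) (hβ : 0 < β) (M : ℝ) (hM : 0 < M)
    (S R : ℝ → ℝ)
    (hS : ∀ α, S α = ∑ i ∈ Finset.range (d1 + 1), min ((((d1 : ℝ) - i) * τ + d2) * β) α
      + ∑ i ∈ Finset.Icc 1 (k - d1 - 1), min (((d2 : ℝ) - i) * β) α)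
    (hR : ∀ α, R α = ∑ i ∈ Finset.range (d1 + 1), min ((((d1 : ℝ) - i) * τ + d2) * β) α
      + ∑ i ∈ Finset.Icc 1 (k - d1 - 1), min (((d2 : ℝ) - i) * τ * β) α) :
    (∀ α : ℝ, 0 ≤ α → S α ≤ R α) ∧
    (M ≤ ∑ i ∈ Finset.range (d1 + 1), (((d1 : ℝ) - i) * τ + d2) * β
        + ∑ i ∈ Finset.Icc 1 (k - d1 - 1), ((d2 : ℝ) - i) * β →
      ∀ αS αR : ℝ,
        IsLeast {α : ℝ | 0 ≤ α ∧ M ≤ S α} αS →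
        IsLeast {α : ℝ | 0 ≤ α ∧ M ≤ R α} αR →
        αR ≤ αS) := by
  have hdom : ∀ α : ℝ, 0 ≤ α → S α ≤ R α := by
    intro α hα
    rw [hS, hR]
    gcongr with i hi
    have hi' := Finset.mem_Icc.mp hi
    have hnn : (0 : ℝ) ≤ (d2 : ℝ) - i := by
      have : (i : ℝ) ≤ (d2 : ℝ) := by exact_mod_cast hi'.2.trans hkd2
      linarith
    nlinarith
  refine ⟨hdom, ?_⟩
  intro _ αS αR hS' hR'
  exact hR'.2 ⟨hS'.1.1, hS'.1.2.trans (hdom αS hS'.1.1)⟩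
end
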